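/- For x > y > 0: 2/3 - (coth x - coth y)/(x-y) - (16/243)(x² + xy + y²) ≤ (1/(x-y))∫_y^x (coth t)/t dt ≤ 2/3 - (coth x - coth y)/(x-y). -/

import Mathlib

open Real Set
open scoped Interval

/-!
Write `coth t / t = (2/3 + 1 / sinh² t) - r(t)`. Since `2/3 t - coth t` is an antiderivative of
`2/3 + 1 / sinh² t`, the theorem reduces to the pointwise estimate `0 ≤ r(t) ≤ 16/81 t²` for
`t > 0`, integrated over `[y, x]`. With `u = 2t`, clearing denominators turns the two halves of
that estimate into `3 sinh u ≤ u cosh u + 2u` and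
`27 u cosh u + 54 u ≤ 2 u³ (cosh u - 1) + 81 sinh u`. In both, the difference of the two sides
and its first two derivatives vanish at `u = 0`, while its third derivative is visibly
nonnegative for `u ≥ 0`.
-/

lemma nonneg_of_hasDerivAt_of_nonneg {f f' : ℝ → ℝ} (hf : ∀ u, HasDerivAt f (f' u) u)
    (h0 : 0 ≤ f 0) (hf' : ∀ u, 0 ≤ u → 0 ≤ f' u) {u : ℝ} (hu : 0 ≤ u) : 0 ≤ f u := by
  have hmono : MonotoneOn f (Ici 0) :=
    monotoneOn_of_hasDerivWithinAt_nonneg (convex_Ici 0)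
      (fun v _ ↦ (hf v).continuousAt.continuousWithinAt) (fun v _ ↦ (hf v).hasDerivWithinAt)
      (fun v hv ↦ hf' v (by rw [interior_Ici] at hv; exact le_of_lt hv))
  exact h0.trans (hmono self_mem_Ici hu hu)

section HyperbolicInequalities

variable {u : ℝ}

lemma sinh_le_mul_cosh (hu : 0 ≤ u) : sinh u ≤ u * cosh u := by
  have h := nonneg_of_hasDerivAt_of_nonneg (f := fun u ↦ u * cosh u - sinh u)
    (fun u ↦ (((hasDerivAt_id u).mul (hasDerivAt_cosh u)).sub (hasDerivAt_sinh u)).congr_deriv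
      (show _ = u * sinh u by simp only [id_eq]; ring))
    (by simp) (fun u hu ↦ mul_nonneg hu (sinh_nonneg_iff.2 hu)) hu
  linarith

lemma two_mul_cosh_le (hu : 0 ≤ u) : 2 * cosh u ≤ u * sinh u + 2 := by
  have h := nonneg_of_hasDerivAt_of_nonneg (f := fun u ↦ u * sinh u + 2 - 2 * cosh u)
    (fun u ↦ ((((hasDerivAt_id u).mul (hasDerivAt_sinh u)).add_const 2).sub
      ((hasDerivAt_cosh u).const_mul 2)).congr_deriv
      (show _ = u * cosh u - sinh u by simp only [id_eq]; ring))
    (by simp) (fun u hu ↦ sub_nonneg.2 (sinh_le_mul_cosh hu)) hu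
  linarith

lemma three_mul_sinh_le (hu : 0 ≤ u) : 3 * sinh u ≤ u * cosh u + 2 * u := by
  have h := nonneg_of_hasDerivAt_of_nonneg (f := fun u ↦ u * cosh u + 2 * u - 3 * sinh u)
    (fun u ↦ ((((hasDerivAt_id u).mul (hasDerivAt_cosh u)).add
      ((hasDerivAt_id u).const_mul 2)).sub ((hasDerivAt_sinh u).const_mul 3)).congr_deriv
      (show _ = u * sinh u + 2 - 2 * cosh u by simp only [id_eq]; ring))
    (by simp) (fun u hu ↦ sub_nonneg.2 (two_mul_cosh_le hu)) hu
  linarith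

lemma cosh_sinh_cubic_ineq_deriv₂ (hu : 0 ≤ u) :
    12 * u + 15 * u * cosh u ≤
      2 * u ^ 3 * cosh u + 12 * u ^ 2 * sinh u + 27 * sinh u := by
  have h := nonneg_of_hasDerivAt_of_nonneg
    (f := fun u ↦ 2 * u ^ 3 * cosh u + 12 * u ^ 2 * sinh u - 15 * u * cosh u - 12 * u
      + 27 * sinh u)
    (fun u ↦ (((((((hasDerivAt_pow 3 u).const_mul 2).mul (hasDerivAt_cosh u)).add
      (((hasDerivAt_pow 2 u).const_mul 12).mul (hasDerivAt_sinh u))).sub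
      (((hasDerivAt_id u).const_mul 15).mul (hasDerivAt_cosh u))).sub
      ((hasDerivAt_id u).const_mul 12)).add ((hasDerivAt_sinh u).const_mul 27)).congr_deriv
      (show _ = 2 * u ^ 3 * sinh u + 18 * u ^ 2 * cosh u + 9 * u * sinh u + 12 * cosh u - 12 by
        simp only [id_eq]; push_cast; ring))
    (by simp) (fun u hu ↦ ?_) hu
  · linarith
  · have hs := sinh_nonneg_iff.2 hu
    have hc := one_le_cosh u
    nlinarith [mul_nonneg (pow_nonneg hu 3) hs, mul_nonneg (pow_nonneg hu 2) (zero_le_one.trans hc),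
      mul_nonneg hu hs]

lemma cosh_sinh_cubic_ineq_deriv (hu : 0 ≤ u) :
    6 * u ^ 2 + 27 * u * sinh u + 54 ≤
      6 * u ^ 2 * cosh u + 2 * u ^ 3 * sinh u + 54 * cosh u := by
  have h := nonneg_of_hasDerivAt_of_nonneg
    (f := fun u ↦ 6 * u ^ 2 * cosh u - 6 * u ^ 2 + 2 * u ^ 3 * sinh u + 54 * cosh u
      - 27 * u * sinh u - 54)
    (fun u ↦ ((((((((hasDerivAt_pow 2 u).const_mul 6).mul (hasDerivAt_cosh u)).sub
      ((hasDerivAt_pow 2 u).const_mul 6)).add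
      (((hasDerivAt_pow 3 u).const_mul 2).mul (hasDerivAt_sinh u))).add
      ((hasDerivAt_cosh u).const_mul 54)).sub
      (((hasDerivAt_id u).const_mul 27).mul (hasDerivAt_sinh u))).sub_const 54).congr_deriv
      (show _ = 2 * u ^ 3 * cosh u + 12 * u ^ 2 * sinh u - 15 * u * cosh u - 12 * u
          + 27 * sinh u by simp only [id_eq]; push_cast; ring))
    (by simp) (fun u hu ↦ by linarith [cosh_sinh_cubic_ineq_deriv₂ hu]) hu
  linarith

lemma cosh_sinh_cubic_ineq (hu : 0 ≤ u) :
    27 * u * cosh u + 54 * u ≤ 2 * u ^ 3 * (cosh u - 1) + 81 * sinh u := by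
  have h := nonneg_of_hasDerivAt_of_nonneg
    (f := fun u ↦ 2 * u ^ 3 * (cosh u - 1) + 81 * sinh u - 27 * u * cosh u - 54 * u)
    (fun u ↦ ((((((hasDerivAt_pow 3 u).const_mul 2).mul ((hasDerivAt_cosh u).sub_const 1)).add
      ((hasDerivAt_sinh u).const_mul 81)).sub
      (((hasDerivAt_id u).const_mul 27).mul (hasDerivAt_cosh u))).sub
      ((hasDerivAt_id u).const_mul 54)).congr_deriv
      (show _ = 6 * u ^ 2 * cosh u - 6 * u ^ 2 + 2 * u ^ 3 * sinh u + 54 * cosh u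
          - 27 * u * sinh u - 54 by simp only [id_eq]; push_cast; ring))
    (by simp) (fun u hu ↦ by linarith [cosh_sinh_cubic_ineq_deriv hu]) hu
  linarith

end HyperbolicInequalities

section CothBounds

variable {t : ℝ}

lemma cosh_div_sinh_div_self_le (ht : 0 < t) :
    cosh t / sinh t / t ≤ 2 / 3 + 1 / sinh t ^ 2 := by
  have hs : 0 < sinh t := sinh_pos_iff.2 ht
  have key := three_mul_sinh_le (u := 2 * t) (by positivity)
  rw [sinh_two_mul, cosh_two_mul, cosh_sq] at key
  have hdiff : 2 / 3 + 1 / sinh t ^ 2 - cosh t / sinh t / t =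
      (2 * t * sinh t ^ 2 + 3 * t - 3 * sinh t * cosh t) / (3 * t * sinh t ^ 2) := by
    field_simp
  have := div_nonneg (a := 2 * t * sinh t ^ 2 + 3 * t - 3 * sinh t * cosh t)
    (b := 3 * t * sinh t ^ 2) (by linarith) (by positivity)
  linarith

lemma le_cosh_div_sinh_div_self (ht : 0 < t) :
    2 / 3 + 1 / sinh t ^ 2 - 16 / 81 * t ^ 2 ≤ cosh t / sinh t / t := by
  have hs : 0 < sinh t := sinh_pos_iff.2 ht
  have key := cosh_sinh_cubic_ineq (u := 2 * t) (by positivity)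
  rw [sinh_two_mul, cosh_two_mul, cosh_sq] at key
  have hdiff : cosh t / sinh t / t - (2 / 3 + 1 / sinh t ^ 2 - 16 / 81 * t ^ 2) =
      (81 * sinh t * cosh t + 16 * t ^ 3 * sinh t ^ 2 - 54 * t * sinh t ^ 2 - 81 * t) /
        (81 * t * sinh t ^ 2) := by
    field_simp
    ring
  have := div_nonneg (a := 81 * sinh t * cosh t + 16 * t ^ 3 * sinh t ^ 2 - 54 * t * sinh t ^ 2
    - 81 * t) (b := 81 * t * sinh t ^ 2) (by linarith) (by positivity)
  linarith

end CothBounds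

lemma hasDerivAt_cosh_div_sinh {t : ℝ} (ht : t ≠ 0) :
    HasDerivAt (fun t ↦ cosh t / sinh t) (-(1 / sinh t ^ 2)) t := by
  refine ((hasDerivAt_cosh t).div (hasDerivAt_sinh t) (sinh_ne_zero.2 ht)).congr_deriv ?_
  rw [← cosh_sq_sub_sinh_sq t]
  ring

section IntervalIntegrals

variable {a b : ℝ}

lemma intervalIntegrable_one_div_sinh_sq (h : (0 : ℝ) ∉ [[a, b]]) :
    IntervalIntegrable (fun t ↦ 1 / sinh t ^ 2) MeasureTheory.volume a b :=
  ContinuousOn.intervalIntegrable <| continuousOn_const.div (continuous_sinh.continuousOn.pow 2)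
    fun _ ht ↦ pow_ne_zero 2 (sinh_ne_zero.2 (ne_of_mem_of_not_mem ht h))

lemma intervalIntegrable_cosh_div_sinh_div_self (h : (0 : ℝ) ∉ [[a, b]]) :
    IntervalIntegrable (fun t ↦ cosh t / sinh t / t) MeasureTheory.volume a b :=
  ContinuousOn.intervalIntegrable <|
    (continuous_cosh.continuousOn.div continuous_sinh.continuousOn
      fun _ ht ↦ sinh_ne_zero.2 (ne_of_mem_of_not_mem ht h)).div continuousOn_id
      fun _ ht ↦ ne_of_mem_of_not_mem ht h

lemma integral_one_div_sinh_sq (h : (0 : ℝ) ∉ [[a, b]]) :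
    ∫ t in a..b, 1 / sinh t ^ 2 = cosh a / sinh a - cosh b / sinh b := by
  have hFTC := intervalIntegral.integral_eq_sub_of_hasDerivAt
    (fun t ht ↦ hasDerivAt_cosh_div_sinh (ne_of_mem_of_not_mem ht h))
    (intervalIntegrable_one_div_sinh_sq h).neg
  rw [intervalIntegral.integral_neg] at hFTC
  linarith

end IntervalIntegrals

section IntegralBounds

variable {x y : ℝ}

lemma integral_cosh_div_sinh_div_self_le (hy : 0 < y) (hxy : y ≤ x) :
    ∫ t in y..x, cosh t / sinh t / t ≤
      2 / 3 * (x - y) - (cosh x / sinh x - cosh y / sinh y) := by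
  have h0 : (0 : ℝ) ∉ [[y, x]] := notMem_uIcc_of_lt hy (hy.trans_le hxy)
  have hcsch := intervalIntegrable_one_div_sinh_sq h0
  calc ∫ t in y..x, cosh t / sinh t / t ≤ ∫ t in y..x, (2 / 3 + 1 / sinh t ^ 2) :=
        intervalIntegral.integral_mono_on hxy (intervalIntegrable_cosh_div_sinh_div_self h0)
          (intervalIntegrable_const.add hcsch)
          fun t ht ↦ cosh_div_sinh_div_self_le (hy.trans_le ht.1)
    _ = 2 / 3 * (x - y) - (cosh x / sinh x - cosh y / sinh y) := by
        rw [intervalIntegral.integral_add intervalIntegrable_const hcsch,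
          intervalIntegral.integral_const, integral_one_div_sinh_sq h0, smul_eq_mul]
        ring

lemma le_integral_cosh_div_sinh_div_self (hy : 0 < y) (hxy : y ≤ x) :
    2 / 3 * (x - y) - (cosh x / sinh x - cosh y / sinh y) - 16 / 243 * (x ^ 3 - y ^ 3) ≤
      ∫ t in y..x, cosh t / sinh t / t := by
  have h0 : (0 : ℝ) ∉ [[y, x]] := notMem_uIcc_of_lt hy (hy.trans_le hxy)
  have hcsch := intervalIntegrable_one_div_sinh_sq h0
  have hsq : IntervalIntegrable (fun t : ℝ ↦ 16 / 81 * t ^ 2) MeasureTheory.volume y x :=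
    (continuous_const.mul (continuous_pow 2)).intervalIntegrable y x
  calc 2 / 3 * (x - y) - (cosh x / sinh x - cosh y / sinh y) - 16 / 243 * (x ^ 3 - y ^ 3)
        = ∫ t in y..x, (2 / 3 + 1 / sinh t ^ 2 - 16 / 81 * t ^ 2) := by
        rw [intervalIntegral.integral_sub (intervalIntegrable_const.add hcsch) hsq,
          intervalIntegral.integral_add intervalIntegrable_const hcsch,
          intervalIntegral.integral_const, integral_one_div_sinh_sq h0, smul_eq_mul,
          intervalIntegral.integral_const_mul, integral_pow]
        ring
    _ ≤ ∫ t in y..x, cosh t / sinh t / t :=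
        intervalIntegral.integral_mono_on hxy ((intervalIntegrable_const.add hcsch).sub hsq)
          (intervalIntegrable_cosh_div_sinh_div_self h0)
          fun t ht ↦ le_cosh_div_sinh_div_self (hy.trans_le ht.1)

end IntegralBounds

theorem simpson_stmt17 (x y : ℝ) (hy : 0 < y) (hxy : y < x) :
    2 / 3 - (Real.cosh x / Real.sinh x - Real.cosh y / Real.sinh y) / (x - y) -
          16 / 243 * (x ^ 2 + x * y + y ^ 2) ≤
        (1 / (x - y)) * ∫ t in y..x, (Real.cosh t / Real.sinh t) / t ∧
      (1 / (x - y)) * ∫ t in y..x, (Real.cosh t / Real.sinh t) / t ≤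
        2 / 3 - (Real.cosh x / Real.sinh x - Real.cosh y / Real.sinh y) / (x - y) := by
  have hlen : 0 < x - y := sub_pos.2 hxy
  have hscale : 0 ≤ 1 / (x - y) := by positivity
  constructor
  · calc 2 / 3 - (cosh x / sinh x - cosh y / sinh y) / (x - y) - 16 / 243 * (x ^ 2 + x * y + y ^ 2)
          = 1 / (x - y) * (2 / 3 * (x - y) - (cosh x / sinh x - cosh y / sinh y)
            - 16 / 243 * (x ^ 3 - y ^ 3)) := by
          field_simp
          ring
      _ ≤ 1 / (x - y) * ∫ t in y..x, cosh t / sinh t / t :=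
          mul_le_mul_of_nonneg_left (le_integral_cosh_div_sinh_div_self hy hxy.le) hscale
  · calc 1 / (x - y) * ∫ t in y..x, cosh t / sinh t / t
          ≤ 1 / (x - y) * (2 / 3 * (x - y) - (cosh x / sinh x - cosh y / sinh y)) :=
          mul_le_mul_of_nonneg_left (integral_cosh_div_sinh_div_self_le hy hxy.le) hscale
      _ = 2 / 3 - (cosh x / sinh x - cosh y / sinh y) / (x - y) := by
          field_simp
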